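/- Let f : ℝ × [0,1] × ℝ × ℝ → ℝ be continuous and continuously differentiable in its last two arguments, and suppose there are constants ξ, M₁, ε₁ > 0 such that f(t,x,u,p) ≤ −ξu² + M₁ whenever u ≥ 0 and |p| ≤ ε₁, and f(t,x,u,p) ≥ ξu² − M₁ whenever u ≤ 0 and |p| ≤ ε₁. Set C = (3e² − e)/(2(e − 1)), let ε ∈ ℝ with |ε| < ξ/(C + 1), and set M₁* = √(M₁/(ξ − (C+1)|ε|)). Let U be a classical solution on (0,∞) × [0,1] of U_t = U_xx − ε U_x V_x − ε U V + ε U² + f(t,x,U,U_x) with U_x(t,0) = U_x(t,1) = 0 for t > 0, where for each t the function V(t,·) is given by V(t,x) = c(t)(eˣ + e^{−x}) + ∫₀ˣ (e^{y−x} − e^{x−y})/2 · U(t,y) dy with c(t) = ∫₀¹ (e^{2−y} + e^{y})/(2(e² − 1)) · U(t,y) dy. Then limsup_{t→∞} max_{x∈[0,1]} |U(t,x)| ≤ M₁*. -/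

import Mathlib

/-!
At a point `x₀` where `|U(t,·)|` is maximal, the Neumann condition forces `U_x = 0` and
`U · U_xx ≤ 0`, the Green's-function formula gives `|V| ≤ C |U|`, and the
dissipativity of `f` then yields `d/dt |U(t,x₀)| ≤ -(ξ - (C+1)|ε|) U² + M₁`. So the continuous
function `M(t) = max |U(t,·)|` decreases at a definite rate whenever it exceeds a level
`c > M₁*`; comparing it with a barrier `max c (A - κ t)` at the first crossing time shows
`M(t) ≤ c` for large `t`.
-/

open Set Filter Topology Real

theorem lt_of_forall_deriv_mul_sub_pos {g g' : ℝ → ℝ} {s : Set ℝ} [hs : s.OrdConnected]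
    {x₀ y : ℝ} (hx₀ : x₀ ∈ s) (hy : y ∈ s) (hne : y ≠ x₀)
    (hg : ∀ z ∈ s, HasDerivWithinAt g (g' z) s z)
    (hpos : ∀ z ∈ s, z ≠ x₀ → 0 < g' z * (z - x₀)) :
    g x₀ < g y := by
  have hcont : ContinuousOn g s := fun z hz => (hg z hz).continuousWithinAt
  rcases hne.lt_or_gt with hlt | hgt
  · have hsub : Icc y x₀ ⊆ s := hs.out hy hx₀
    refine strictAntiOn_of_hasDerivWithinAt_neg (convex_Icc y x₀) (hcont.mono hsub)
      (fun z hz => (hg z (hsub (interior_subset hz))).mono (interior_subset.trans hsub))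
      (fun z hz => ?_) (left_mem_Icc.2 hlt.le) (right_mem_Icc.2 hlt.le) hlt
    rw [interior_Icc] at hz
    have := hpos z (hsub (Ioo_subset_Icc_self hz)) hz.2.ne
    exact neg_of_mul_pos_left this (sub_nonpos.2 hz.2.le)
  · have hsub : Icc x₀ y ⊆ s := hs.out hx₀ hy
    refine strictMonoOn_of_hasDerivWithinAt_pos (convex_Icc x₀ y) (hcont.mono hsub)
      (fun z hz => (hg z (hsub (interior_subset hz))).mono (interior_subset.trans hsub))
      (fun z hz => ?_) (left_mem_Icc.2 hgt.le) (right_mem_Icc.2 hgt.le) hgt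
    rw [interior_Icc] at hz
    have := hpos z (hsub (Ioo_subset_Icc_self hz)) hz.1.ne'
    exact pos_of_mul_pos_left this (sub_nonneg.2 hz.1.le)

theorem IsMaxOn.hasDerivWithinAt_eq_zero_of_neumann {g g' : ℝ → ℝ} {a b x₀ : ℝ}
    (hmax : IsMaxOn g (Icc a b) x₀) (hx₀ : x₀ ∈ Icc a b)
    (hg : HasDerivWithinAt g (g' x₀) (Icc a b) x₀) (ha : g' a = 0) (hb : g' b = 0) :
    g' x₀ = 0 := by
  rcases hx₀.1.eq_or_lt with rfl | hax
  · exact ha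
  rcases hx₀.2.eq_or_lt with rfl | hxb
  · exact hb
  have hnhds : Icc a b ∈ 𝓝 x₀ := Icc_mem_nhds hax hxb
  exact (hmax.isLocalMax hnhds).hasDerivAt_eq_zero (hg.hasDerivAt hnhds)

theorem IsMaxOn.nonpos_of_hasDerivWithinAt_deriv {g g' : ℝ → ℝ} {g'' a b x₀ : ℝ}
    (hmax : IsMaxOn g (Icc a b) x₀) (hab : a < b) (hx₀ : x₀ ∈ Icc a b)
    (hg : ∀ x ∈ Icc a b, HasDerivWithinAt g (g' x) (Icc a b) x) (hcrit : g' x₀ = 0)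
    (hg' : HasDerivWithinAt g' g'' (Icc a b) x₀) :
    g'' ≤ 0 := by
  -- If `g'' > 0`, then near `x₀` the derivative `g'` has the sign of `z - x₀`, so `g` exceeds
  -- `g x₀` at the nearby points of `[a, b]`.
  by_contra! hpos
  have hslope : ∀ᶠ y in 𝓝[Icc a b \ {x₀}] x₀, 0 < slope g' x₀ y :=
    (hasDerivWithinAt_iff_tendsto_slope.1 hg').eventually (eventually_gt_nhds hpos)
  obtain ⟨r, hr, hball⟩ := Metric.eventually_nhds_iff.1 (eventually_nhdsWithin_iff.1 hslope)
  set a' := a ⊔ (x₀ - r / 2)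
  set b' := b ⊓ (x₀ + r / 2)
  have hsub : Icc a' b' ⊆ Icc a b := Icc_subset_Icc le_sup_left inf_le_left
  have hx₀' : x₀ ∈ Icc a' b' :=
    ⟨sup_le hx₀.1 (by linarith), le_inf hx₀.2 (by linarith)⟩
  have hsign : ∀ z ∈ Icc a' b', z ≠ x₀ → 0 < g' z * (z - x₀) := by
    intro z hz hne
    have hdist : dist z x₀ < r := by
      rw [Real.dist_eq, abs_lt]
      constructor <;> linarith [(le_sup_right : x₀ - r / 2 ≤ a'), (inf_le_right : b' ≤ x₀ + r / 2),
        hz.1, hz.2]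
    have h := hball hdist ⟨hsub hz, hne⟩
    rw [slope_def_field, hcrit, sub_zero] at h
    have hz' : z - x₀ ≠ 0 := sub_ne_zero.2 hne
    have : g' z * (z - x₀) = g' z / (z - x₀) * (z - x₀) ^ 2 := by field_simp
    rw [this]
    positivity
  have hab' : a' < b' := lt_inf_iff.2 ⟨sup_lt_iff.2 ⟨hab, by linarith [hx₀.2]⟩,
    sup_lt_iff.2 ⟨by linarith [hx₀.1], by linarith⟩⟩
  have hderiv : ∀ z ∈ Icc a' b', HasDerivWithinAt g (g' z) (Icc a' b') z :=
    fun z hz => (hg z (hsub hz)).mono hsub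
  obtain ⟨y, hy, hne⟩ : ∃ y ∈ Icc a' b', y ≠ x₀ := by
    rcases eq_or_ne a' x₀ with h | h
    · exact ⟨b', right_mem_Icc.2 hab'.le, h ▸ hab'.ne'⟩
    · exact ⟨a', left_mem_Icc.2 hab'.le, h⟩
  exact (lt_of_forall_deriv_mul_sub_pos hx₀' hy hne hderiv hsign).not_ge (hmax (hsub hy))

theorem abs_intervalIntegral_mul_le {k u : ℝ → ℝ} {a b K m : ℝ} (hab : a ≤ b)
    (hk : ∀ y ∈ Ioc a b, |k y| ≤ K) (hu : ∀ y ∈ Ioc a b, |u y| ≤ m) :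
    |∫ y in a..b, k y * u y| ≤ K * m * (b - a) := by
  have := intervalIntegral.norm_integral_le_of_norm_le_const (a := a) (b := b) (C := K * m)
    (f := fun y => k y * u y) fun y hy => by
      rw [uIoc_of_le hab] at hy
      rw [Real.norm_eq_abs, abs_mul]
      exact mul_le_mul (hk y hy) (hu y hy) (abs_nonneg _) ((abs_nonneg _).trans (hk y hy))
  rwa [Real.norm_eq_abs, abs_of_nonneg (sub_nonneg.2 hab)] at this

/-- The solution of `V'' - V + u = 0`, `V'(0) = V'(1) = 0` on `[0, 1]`. -/
noncomputable def neumannSolution (u : ℝ → ℝ) (x : ℝ) : ℝ :=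
  (∫ y in (0:ℝ)..1, (exp (2 - y) + exp y) / (2 * (exp 2 - 1)) * u y) * (exp x + exp (-x)) +
    ∫ y in (0:ℝ)..x, (exp (y - x) - exp (x - y)) / 2 * u y

theorem abs_neumannSolution_le {u : ℝ → ℝ} {m : ℝ} (hu : ∀ y ∈ Icc (0:ℝ) 1, |u y| ≤ m)
    {x : ℝ} (hx : x ∈ Icc (0:ℝ) 1) :
    |neumannSolution u x| ≤ (3 * exp 2 - exp 1) / (2 * (exp 1 - 1)) * m := by
  have hm : 0 ≤ m := (abs_nonneg _).trans (hu 0 (left_mem_Icc.2 zero_le_one))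
  have he : 1 < exp 1 := one_lt_exp_iff.2 one_pos
  have he2 : exp 2 = exp 1 * exp 1 := by rw [← exp_add]; norm_num
  have hden : 0 < 2 * (exp 2 - 1) := by nlinarith
  have hc : |∫ y in (0:ℝ)..1, (exp (2 - y) + exp y) / (2 * (exp 2 - 1)) * u y|
      ≤ (exp 2 + exp 1) / (2 * (exp 2 - 1)) * m := by
    have := abs_intervalIntegral_mul_le zero_le_one (K := (exp 2 + exp 1) / (2 * (exp 2 - 1)))
      (k := fun y => (exp (2 - y) + exp y) / (2 * (exp 2 - 1))) (u := u)
      (fun y hy => by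
        rw [abs_of_pos (by positivity)]
        gcongr
        · linarith [hy.1]
        · exact hy.2)
      (fun y hy => hu y (Ioc_subset_Icc_self hy))
    simpa using this
  have hI : |∫ y in (0:ℝ)..x, (exp (y - x) - exp (x - y)) / 2 * u y| ≤ exp 1 * m := by
    have := abs_intervalIntegral_mul_le hx.1 (K := exp 1)
      (k := fun y => (exp (y - x) - exp (x - y)) / 2) (u := u)
      (fun y hy => by
        have h₁ : exp (y - x) ≤ exp 1 := exp_le_exp.2 (by linarith [hy.2])
        have h₂ : exp (x - y) ≤ exp 1 := exp_le_exp.2 (by linarith [hy.1, hx.2])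
        rw [abs_le]
        constructor <;> linarith [exp_pos (y - x), exp_pos (x - y)])
      (fun y hy => hu y ⟨hy.1.le, hy.2.trans hx.2⟩)
    calc _ ≤ exp 1 * m * (x - 0) := this
      _ ≤ exp 1 * m := by rw [sub_zero]; exact mul_le_of_le_one_right (by positivity) hx.2
  have hcosh : |exp x + exp (-x)| ≤ exp 1 + 1 := by
    rw [abs_of_pos (by positivity)]
    gcongr
    · exact hx.2
    · exact exp_le_one_iff.2 (by linarith [hx.1])
  calc |neumannSolution u x|
      ≤ |∫ y in (0:ℝ)..1, (exp (2 - y) + exp y) / (2 * (exp 2 - 1)) * u y|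
          * |exp x + exp (-x)| + |∫ y in (0:ℝ)..x, (exp (y - x) - exp (x - y)) / 2 * u y| := by
        rw [← abs_mul]; exact abs_add_le _ _
    _ ≤ (exp 2 + exp 1) / (2 * (exp 2 - 1)) * m * (exp 1 + 1) + exp 1 * m := by
        gcongr
    _ = (3 * exp 2 - exp 1) / (2 * (exp 1 - 1)) * m := by
        have h₁ : exp 1 - 1 ≠ 0 := by linarith
        have h₂ : exp 1 + 1 ≠ 0 := by positivity
        rw [he2, show exp 1 * exp 1 - 1 = (exp 1 - 1) * (exp 1 + 1) by ring]
        field_simp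
        ring

theorem chemotaxis_rhs_le {ε ξ C M₁ u v w F : ℝ} (hu : 0 ≤ u) (hw : w ≤ 0) (hv : |v| ≤ C * u)
    (hF : F ≤ -ξ * u ^ 2 + M₁) :
    w - ε * u * v + ε * u ^ 2 + F ≤ -(ξ - (C + 1) * |ε|) * u ^ 2 + M₁ := by
  have huv : -(ε * u * v) ≤ C * |ε| * u ^ 2 :=
    calc -(ε * u * v) ≤ |ε * u * v| := neg_le_abs _
      _ = |ε| * u * |v| := by rw [abs_mul, abs_mul, abs_of_nonneg hu]
      _ ≤ |ε| * u * (C * u) := by gcongr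
      _ = C * |ε| * u ^ 2 := by ring
  have hu2 : ε * u ^ 2 ≤ |ε| * u ^ 2 := by gcongr; exact le_abs_self ε
  linarith

theorem exists_hasDerivAt_abs_le_of_isMaxOn_abs
    {f : ℝ → ℝ → ℝ → ℝ → ℝ} {ξ M₁ ε₁ C ε t x₀ : ℝ} {U Ut Ux Uxx V Vx : ℝ → ℝ → ℝ}
    (hε₁ : 0 ≤ ε₁)
    (hdiss₁ : ∀ t : ℝ, ∀ x ∈ Icc (0:ℝ) 1, ∀ w p : ℝ,
      0 ≤ w → |p| ≤ ε₁ → f t x w p ≤ -ξ * w ^ 2 + M₁)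
    (hdiss₂ : ∀ t : ℝ, ∀ x ∈ Icc (0:ℝ) 1, ∀ w p : ℝ,
      w ≤ 0 → |p| ≤ ε₁ → ξ * w ^ 2 - M₁ ≤ f t x w p)
    (hUt : HasDerivAt (fun s => U s x₀) (Ut t x₀) t)
    (hUx : ∀ x ∈ Icc (0:ℝ) 1, HasDerivWithinAt (fun y => U t y) (Ux t x) (Icc 0 1) x)
    (hUxx : ∀ x ∈ Icc (0:ℝ) 1, HasDerivWithinAt (fun y => Ux t y) (Uxx t x) (Icc 0 1) x)
    (hbc : Ux t 0 = 0 ∧ Ux t 1 = 0)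
    (heq : Ut t x₀ = Uxx t x₀ - ε * Ux t x₀ * Vx t x₀ - ε * U t x₀ * V t x₀ +
      ε * (U t x₀) ^ 2 + f t x₀ (U t x₀) (Ux t x₀))
    (hV : |V t x₀| ≤ C * |U t x₀|)
    (hx₀ : x₀ ∈ Icc (0:ℝ) 1) (hmax : IsMaxOn (fun x => |U t x|) (Icc 0 1) x₀)
    (hne : U t x₀ ≠ 0) :
    ∃ d, HasDerivAt (fun s => |U s x₀|) d t ∧ d ≤ -(ξ - (C + 1) * |ε|) * (U t x₀) ^ 2 + M₁ := by
  have hp : |(0:ℝ)| ≤ ε₁ := by simpa using hε₁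
  rcases hne.lt_or_gt with hneg | hpos
  · have hmax' : IsMaxOn (fun x => -U t x) (Icc 0 1) x₀ := fun y hy =>
      (neg_le_abs (U t y)).trans ((hmax hy).trans_eq (abs_of_neg hneg))
    have hUx₀ : -Ux t x₀ = 0 := hmax'.hasDerivWithinAt_eq_zero_of_neumann
      (g' := fun x => -Ux t x) hx₀ (hUx x₀ hx₀).neg (by simp [hbc.1]) (by simp [hbc.2])
    have hUxx₀ : -Uxx t x₀ ≤ 0 := hmax'.nonpos_of_hasDerivWithinAt_deriv
      (g' := fun x => -Ux t x) zero_lt_one hx₀ (fun x hx => (hUx x hx).neg) hUx₀ (hUxx x₀ hx₀).neg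
    refine ⟨-Ut t x₀, by
      simpa [Function.comp_def] using (hasDerivAt_abs_neg hneg).comp t hUt, ?_⟩
    -- `(u, v, w, ε, F) ↦ (-u, -v, -w, -ε, -F)` turns this case into the nonnegative one.
    have := chemotaxis_rhs_le (ε := -ε) (ξ := ξ) (M₁ := M₁) (neg_nonneg.2 hneg.le) hUxx₀
      (v := -V t x₀) (by simpa [abs_of_neg hneg] using hV) (F := -f t x₀ (U t x₀) 0)
      (by linarith [hdiss₂ t x₀ hx₀ _ 0 hneg.le hp])
    rw [heq, neg_eq_zero.1 hUx₀]
    simp only [abs_neg, neg_sq] at this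
    linarith
  · have hmax' : IsMaxOn (fun x => U t x) (Icc 0 1) x₀ := fun y hy =>
      (le_abs_self (U t y)).trans ((hmax hy).trans_eq (abs_of_pos hpos))
    have hUx₀ : Ux t x₀ = 0 := hmax'.hasDerivWithinAt_eq_zero_of_neumann hx₀ (hUx x₀ hx₀)
      hbc.1 hbc.2
    have hUxx₀ : Uxx t x₀ ≤ 0 := hmax'.nonpos_of_hasDerivWithinAt_deriv zero_lt_one hx₀
      hUx hUx₀ (hUxx x₀ hx₀)
    refine ⟨Ut t x₀, by
      simpa [Function.comp_def] using (hasDerivAt_abs_pos hpos).comp t hUt, ?_⟩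
    have := chemotaxis_rhs_le (ε := ε) hpos.le hUxx₀ (v := V t x₀)
      (by simpa [abs_of_pos hpos] using hV) (hdiss₁ t x₀ hx₀ _ 0 hpos.le hp)
    rw [heq, hUx₀]
    linarith

theorem HasDerivAt.eventually_nhdsLT_add_mul_lt {h : ℝ → ℝ} {h' κ t : ℝ}
    (hh : HasDerivAt h h' t) (hκ : h' < -κ) :
    ∀ᶠ s in 𝓝[<] t, h t + κ * (t - s) < h s := by
  have hslope : ∀ᶠ s in 𝓝[<] t, slope h t s < -κ :=
    ((hasDerivAt_iff_tendsto_slope.1 hh).mono_left (nhdsLT_le_nhdsNE t)).eventually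
      (eventually_lt_nhds hκ)
  filter_upwards [hslope, self_mem_nhdsWithin] with s hs hst
  rw [slope_def_field, div_lt_iff_of_neg (sub_neg.2 hst)] at hs
  linarith

theorem lt_max_sub_mul_of_eventually_lt {φ : ℝ → ℝ} {t₀ b κ A : ℝ}
    (hφ : ContinuousOn φ (Ici t₀)) (hκ : 0 ≤ κ) (hA : φ t₀ < A)
    (hdecay : ∀ t > t₀, b ≤ φ t → ∀ᶠ s in 𝓝[<] t, φ t + κ * (t - s) < φ s) :
    ∀ t ≥ t₀, φ t < max b (A - κ * (t - t₀)) := by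
  set ψ : ℝ → ℝ := fun t => max b (A - κ * (t - t₀))
  have hψ : ∀ s t, s ≤ t → ψ s ≤ ψ t + κ * (t - s) := by
    intro s t hst
    have hκst : 0 ≤ κ * (t - s) := mul_nonneg hκ (sub_nonneg.2 hst)
    refine max_le (by linarith [le_max_left b (A - κ * (t - t₀))]) ?_
    linarith [le_max_right b (A - κ * (t - t₀))]
  -- At the first time `t₁` where `φ` reaches the barrier `ψ`, `φ` decays faster than `ψ`, so
  -- `ψ < φ` already just before `t₁`.
  by_contra! hbad
  set S := Ici t₀ ∩ (fun t => φ t - ψ t) ⁻¹' Ici 0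
  have hS : S.Nonempty := by
    obtain ⟨t, ht, hψφ⟩ := hbad
    exact ⟨t, ht, sub_nonneg.2 hψφ⟩
  have hSb : BddBelow S := ⟨t₀, fun t ht => ht.1⟩
  set t₁ := sInf S
  have ht₁ : t₁ ∈ S :=
    ((hφ.sub (by fun_prop)).preimage_isClosed_of_isClosed isClosed_Ici isClosed_Ici).csInf_mem
      hS hSb
  have hψφ₁ : ψ t₁ ≤ φ t₁ := sub_nonneg.1 ht₁.2
  have ht₀₁ : t₀ < t₁ := by
    refine ht₁.1.lt_of_ne fun h => ?_
    have hAψ : A ≤ ψ t₀ := by simp [ψ]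
    rw [h] at hA hAψ
    linarith
  obtain ⟨s, hs, hst⟩ := ((hdecay t₁ ht₀₁ ((le_max_left _ _).trans hψφ₁)).and
    (Ioo_mem_nhdsLT ht₀₁)).exists
  have hsS : s ∈ S := ⟨hst.1.le, show 0 ≤ φ s - ψ s by linarith [hψ s t₁ hst.2.le]⟩
  exact (csInf_le hSb hsS).not_gt hst.2

theorem eventually_le_of_eventually_lt {φ : ℝ → ℝ} {t₀ b κ : ℝ}
    (hφ : ContinuousOn φ (Ici t₀)) (hκ : 0 < κ)
    (hdecay : ∀ t > t₀, b ≤ φ t → ∀ᶠ s in 𝓝[<] t, φ t + κ * (t - s) < φ s) :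
    ∀ᶠ t in atTop, φ t ≤ b := by
  have hbarrier := lt_max_sub_mul_of_eventually_lt hφ hκ.le (lt_add_one (φ t₀)) hdecay
  filter_upwards [eventually_ge_atTop t₀, eventually_ge_atTop (t₀ + (φ t₀ + 1 - b) / κ)]
    with t ht₀ ht
  refine (hbarrier t ht₀).le.trans (max_le le_rfl ?_)
  have := (div_le_iff₀ hκ).1 (le_sub_iff_add_le'.2 ht)
  linarith

theorem continuousOn_sSup_image_Icc {g : ℝ → ℝ → ℝ} {t₀ a b : ℝ} (hab : a ≤ b)
    (hg : ContinuousOn (fun q : ℝ × ℝ => g q.1 q.2) (Ici t₀ ×ˢ Icc a b)) :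
    ContinuousOn (fun t => sSup (g t '' Icc a b)) (Ici t₀) := by
  set G : ℝ → ℝ → ℝ := fun t x => g (max t₀ t) (projIcc a b hab x)
  have hG : Continuous (Function.uncurry G) :=
    hg.comp_continuous (f := fun q : ℝ × ℝ => (max t₀ q.1, (projIcc a b hab q.2 : ℝ)))
      ((continuous_const.max continuous_fst).prodMk
        (continuous_subtype_val.comp (continuous_projIcc.comp continuous_snd)))
      fun q => ⟨le_max_left t₀ q.1, (projIcc a b hab q.2).2⟩
  refine ((isCompact_Icc (a := a) (b := b)).continuous_sSup (f := G) hG).continuousOn.congr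
    fun t ht => congrArg sSup (image_congr fun x hx => ?_)
  simp [G, max_eq_right (mem_Ici.1 ht), projIcc_of_mem hab hx]

theorem stmt12_general
    (f : ℝ → ℝ → ℝ → ℝ → ℝ)
    (ξ M₁ ε₁ : ℝ) (hε₁ : 0 < ε₁)
    (hdiss₁ : ∀ t : ℝ, ∀ x ∈ Set.Icc (0:ℝ) 1, ∀ w p : ℝ,
      0 ≤ w → |p| ≤ ε₁ → f t x w p ≤ -ξ * w ^ 2 + M₁)
    (hdiss₂ : ∀ t : ℝ, ∀ x ∈ Set.Icc (0:ℝ) 1, ∀ w p : ℝ,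
      w ≤ 0 → |p| ≤ ε₁ → ξ * w ^ 2 - M₁ ≤ f t x w p)
    (C : ℝ) (hC : C = (3 * Real.exp 2 - Real.exp 1) / (2 * (Real.exp 1 - 1)))
    (ε : ℝ) (hε : |ε| < ξ / (C + 1))
    (Mstar : ℝ) (hMstar : Mstar = Real.sqrt (M₁ / (ξ - (C + 1) * |ε|)))
    (U Ut Ux Uxx V Vx : ℝ → ℝ → ℝ)
    (hU_cont : ContinuousOn (fun q : ℝ × ℝ => U q.1 q.2) (Set.Ici 0 ×ˢ Set.Icc 0 1))
    (hUt : ∀ t > (0:ℝ), ∀ x ∈ Set.Icc (0:ℝ) 1, HasDerivAt (fun s => U s x) (Ut t x) t)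
    (hUx : ∀ t > (0:ℝ), ∀ x ∈ Set.Icc (0:ℝ) 1,
      HasDerivWithinAt (fun y => U t y) (Ux t x) (Set.Icc 0 1) x)
    (hUxx : ∀ t > (0:ℝ), ∀ x ∈ Set.Icc (0:ℝ) 1,
      HasDerivWithinAt (fun y => Ux t y) (Uxx t x) (Set.Icc 0 1) x)
    (hV : ∀ t x, V t x =
      (∫ y in (0:ℝ)..1, (Real.exp (2 - y) + Real.exp y) / (2 * (Real.exp 2 - 1)) * U t y) *
        (Real.exp x + Real.exp (-x)) +
      ∫ y in (0:ℝ)..x, (Real.exp (y - x) - Real.exp (x - y)) / 2 * U t y)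
    (heq : ∀ t > (0:ℝ), ∀ x ∈ Set.Icc (0:ℝ) 1,
      Ut t x = Uxx t x - ε * Ux t x * Vx t x - ε * U t x * V t x + ε * (U t x) ^ 2 +
        f t x (U t x) (Ux t x))
    (hbc : ∀ t > (0:ℝ), Ux t 0 = 0 ∧ Ux t 1 = 0) :
    Filter.limsup (fun t => sSup ((fun x => |U t x|) '' Set.Icc (0:ℝ) 1)) Filter.atTop
      ≤ Mstar := by
  have hC1 : 0 < C + 1 := by
    rw [hC]
    have he : 1 < exp 1 := one_lt_exp_iff.2 one_pos
    have : 0 < 3 * exp 2 - exp 1 := by linarith [exp_lt_exp.2 (one_lt_two : (1:ℝ) < 2)]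
    positivity
  set δ := ξ - (C + 1) * |ε|
  have hδ : 0 < δ := by linarith [(lt_div_iff₀ hC1).1 hε]
  have hUcont : ∀ t > (0:ℝ), ContinuousOn (fun x => |U t x|) (Icc 0 1) :=
    fun t ht => ContinuousOn.abs fun x hx => (hUx t ht x hx).continuousWithinAt
  refine le_of_forall_gt_imp_ge_of_dense fun c hc => limsup_le_of_le
    (isCoboundedUnder_le_of_le atTop fun t => Real.sSup_nonneg
      (by rintro _ ⟨x, -, rfl⟩; exact abs_nonneg _)) ?_
  have hc0 : 0 < c := (hMstar ▸ sqrt_nonneg _).trans_lt hc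
  have hMc : M₁ < δ * c ^ 2 := by
    rwa [hMstar, sqrt_lt' hc0, div_lt_iff₀ hδ, mul_comm] at hc
  refine eventually_le_of_eventually_lt (continuousOn_sSup_image_Icc zero_le_one hU_cont.abs)
    (half_pos (sub_pos.2 hMc)) fun t ht hct => ?_
  obtain ⟨x₀, hx₀, hMt, hmax⟩ :=
    isCompact_Icc.exists_sSup_image_eq_and_ge (nonempty_Icc.2 zero_le_one) (hUcont t ht)
  rw [hMt] at hct ⊢
  have hVx₀ : |V t x₀| ≤ C * |U t x₀| := by
    rw [hV, hC]
    exact abs_neumannSolution_le hmax hx₀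
  obtain ⟨d, hd, hdle⟩ := exists_hasDerivAt_abs_le_of_isMaxOn_abs hε₁.le hdiss₁ hdiss₂
    (hUt t ht x₀ hx₀) (hUx t ht) (hUxx t ht) (hbc t ht) (heq t ht x₀ hx₀) hVx₀ hx₀
    (isMaxOn_iff.2 hmax) (abs_pos.1 (hc0.trans_le hct))
  have hc2 : c ^ 2 ≤ (U t x₀) ^ 2 := sq_le_sq.2 (by rwa [abs_of_pos hc0])
  filter_upwards [hd.eventually_nhdsLT_add_mul_lt (κ := (δ * c ^ 2 - M₁) / 2) (by nlinarith),
    Ioo_mem_nhdsLT ht] with s hs hs'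
  exact hs.trans_le ((hUcont s hs'.1).le_sSup_image_Icc hx₀)

/-- Ultimate sup-norm bound for classical solutions of the parabolic–elliptic
chemotaxis system `U_t = U_xx − ε U_x V_x − ε U V + ε U² + f(t,x,U,U_x)`,
`V_xx − V + U = 0`, with Neumann boundary conditions. -/
theorem stmt12
    (f : ℝ → ℝ → ℝ → ℝ → ℝ)
    (hf_cont : Continuous fun q : ℝ × ℝ × ℝ × ℝ => f q.1 q.2.1 q.2.2.1 q.2.2.2)
    (hf_smooth : ∀ t x, ContDiff ℝ 1 fun q : ℝ × ℝ => f t x q.1 q.2)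
    (ξ M₁ ε₁ : ℝ) (hξ : 0 < ξ) (hM₁ : 0 < M₁) (hε₁ : 0 < ε₁)
    (hdiss₁ : ∀ t : ℝ, ∀ x ∈ Set.Icc (0:ℝ) 1, ∀ w p : ℝ,
      0 ≤ w → |p| ≤ ε₁ → f t x w p ≤ -ξ * w ^ 2 + M₁)
    (hdiss₂ : ∀ t : ℝ, ∀ x ∈ Set.Icc (0:ℝ) 1, ∀ w p : ℝ,
      w ≤ 0 → |p| ≤ ε₁ → ξ * w ^ 2 - M₁ ≤ f t x w p)
    (C : ℝ) (hC : C = (3 * Real.exp 2 - Real.exp 1) / (2 * (Real.exp 1 - 1)))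
    (ε : ℝ) (hε : |ε| < ξ / (C + 1))
    (Mstar : ℝ) (hMstar : Mstar = Real.sqrt (M₁ / (ξ - (C + 1) * |ε|)))
    (U Ut Ux Uxx V Vx : ℝ → ℝ → ℝ)
    (hU_cont : ContinuousOn (fun q : ℝ × ℝ => U q.1 q.2) (Set.Ici 0 ×ˢ Set.Icc 0 1))
    (hUt : ∀ t > (0:ℝ), ∀ x ∈ Set.Icc (0:ℝ) 1, HasDerivAt (fun s => U s x) (Ut t x) t)
    (hUx : ∀ t > (0:ℝ), ∀ x ∈ Set.Icc (0:ℝ) 1,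
      HasDerivWithinAt (fun y => U t y) (Ux t x) (Set.Icc 0 1) x)
    (hUxx : ∀ t > (0:ℝ), ∀ x ∈ Set.Icc (0:ℝ) 1,
      HasDerivWithinAt (fun y => Ux t y) (Uxx t x) (Set.Icc 0 1) x)
    (hderiv_cont : ContinuousOn
      (fun q : ℝ × ℝ => (Ut q.1 q.2, Ux q.1 q.2, Uxx q.1 q.2)) (Set.Ioi 0 ×ˢ Set.Icc 0 1))
    (hV : ∀ t x, V t x =
      (∫ y in (0:ℝ)..1, (Real.exp (2 - y) + Real.exp y) / (2 * (Real.exp 2 - 1)) * U t y) *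
        (Real.exp x + Real.exp (-x)) +
      ∫ y in (0:ℝ)..x, (Real.exp (y - x) - Real.exp (x - y)) / 2 * U t y)
    (hVx : ∀ t > (0:ℝ), ∀ x ∈ Set.Icc (0:ℝ) 1,
      HasDerivWithinAt (fun y => V t y) (Vx t x) (Set.Icc 0 1) x)
    (heq : ∀ t > (0:ℝ), ∀ x ∈ Set.Icc (0:ℝ) 1,
      Ut t x = Uxx t x - ε * Ux t x * Vx t x - ε * U t x * V t x + ε * (U t x) ^ 2 +
        f t x (U t x) (Ux t x))
    (hbc : ∀ t > (0:ℝ), Ux t 0 = 0 ∧ Ux t 1 = 0) :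
    Filter.limsup (fun t => sSup ((fun x => |U t x|) '' Set.Icc (0:ℝ) 1)) Filter.atTop
      ≤ Mstar :=
  stmt12_general f ξ M₁ ε₁ hε₁ hdiss₁ hdiss₂ C hC ε hε Mstar hMstar U Ut Ux Uxx V Vx hU_cont hUt hUx
    hUxx hV heq hbc
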